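/- arXiv:2510.13328 — 5 statements merged into one kernel-verified Lean document; each statement's English description precedes it below -/
import Mathlib

section
/- Let Ω be a probability space with probability measures p and q such that p is absolutely continuous with respect to q. Then the Kullback-Leibler divergence satisfies D_KL(p‖q) = sup over measurable real-valued random variables X (for which E_p[X] and E_q[exp X] are well-defined) of (E_p[X] − ln E_q[exp X]). -/
/-!
If `E_p X` and `E_q e^X` are finite, the tilted measure `q_X = e^X q / E_q e^X` satisfies
`D(p‖q_X) = D(p‖q) - (E_p X - log E_q e^X)`, so Gibbs' inequality `D(p‖q_X) ≥ 0` gives the upper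
bound. Conversely, the truncations `X_n` of `log (dp/dq)` to `[-n, n]` have `E_q e^{X_n} ≤ 1 + e^{-n}`,
while `E_p X_n → D(p‖q)`: by dominated convergence when `log (dp/dq) ∈ L¹(p)`, and to `+∞` otherwise,
because the negative part `(log (dp/dq))⁻` is always `p`-integrable (`t (log t)⁻ ≤ 1`). In the latter
case both sides of the theorem are `+∞`, which Lean renders as the junk value `0` on both sides.
-/

open MeasureTheory Real Filter Topology

def clip (n x : ℝ) : ℝ := max (min x n) (-n)

section Clip

variable {n x : ℝ}

lemma abs_clip_le (hn : 0 ≤ n) : |clip n x| ≤ n := by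
  rw [clip, abs_le]; grind

lemma abs_clip_le_abs (hn : 0 ≤ n) : |clip n x| ≤ |x| := by
  rw [clip]; grind

lemma clip_eq_self (h : |x| ≤ n) : clip n x = x := by
  rw [clip, min_eq_left (abs_le.mp h).2, max_eq_left (abs_le.mp h).1]

lemma tendsto_clip_natCast (x : ℝ) : Tendsto (fun n : ℕ => clip n x) atTop (𝓝 x) :=
  tendsto_const_nhds.congr' <| (eventually_ge_atTop ⌈|x|⌉₊).mono fun _ hn =>
    (clip_eq_self ((Nat.le_ceil _).trans (Nat.cast_le.mpr hn))).symm

lemma min_max_zero_le_clip_add (hn : 0 ≤ n) : min (max x 0) n ≤ clip n x + max (-x) 0 := by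
  rw [clip]; grind

lemma exp_clip_le : exp (clip n x) ≤ exp x + exp (-n) := by
  calc exp (clip n x) ≤ exp (max x (-n)) := exp_le_exp.mpr (max_le_max_right _ (min_le_left _ _))
    _ = max (exp x) (exp (-n)) := exp_monotone.map_max
    _ ≤ exp x + exp (-n) := max_le (by linarith [exp_pos (-n)]) (by linarith [exp_pos x])

end Clip

section Integral

variable {α : Type*} [MeasurableSpace α] {μ : Measure α} {f : α → ℝ}

lemma MeasureTheory.AEStronglyMeasurable.clip (hf : AEStronglyMeasurable f μ) (n : ℝ) :
    AEStronglyMeasurable (fun x => clip n (f x)) μ := by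
  unfold _root_.clip; fun_prop

lemma integrable_clip [IsFiniteMeasure μ] (hf : AEStronglyMeasurable f μ) (n : ℕ) :
    Integrable (fun x => clip n (f x)) μ :=
  .of_bound (hf.clip n) n (.of_forall fun _ => (abs_clip_le n.cast_nonneg))

lemma tendsto_integral_clip (hf : Integrable f μ) :
    Tendsto (fun n : ℕ => ∫ x, clip n (f x) ∂μ) atTop (𝓝 (∫ x, f x ∂μ)) :=
  tendsto_integral_of_dominated_convergence (fun x => |f x|) (fun n => hf.1.clip n) hf.abs
    (fun n => .of_forall fun _ => abs_clip_le_abs n.cast_nonneg)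
    (.of_forall fun x => tendsto_clip_natCast (f x))

lemma integrable_of_forall_integral_min_le [IsFiniteMeasure μ] (hf : AEStronglyMeasurable f μ)
    (hf₀ : 0 ≤ᵐ[μ] f) {M : ℝ} (hM : ∀ n : ℕ, ∫ x, min (f x) n ∂μ ≤ M) : Integrable f μ := by
  have hmin : ∀ n : ℕ, Integrable (fun x => min (f x) n) μ := fun n =>
    .of_bound (by fun_prop) n (by
      filter_upwards [hf₀] with x (hx : 0 ≤ f x)
      rw [Real.norm_eq_abs, abs_le]; constructor <;> grind)
  refine ⟨hf, (hasFiniteIntegral_iff_ofReal hf₀).mpr ?_⟩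
  have hlim : Tendsto (fun n : ℕ => ∫⁻ x, ENNReal.ofReal (min (f x) n) ∂μ) atTop
      (𝓝 (∫⁻ x, ENNReal.ofReal (f x) ∂μ)) :=
    lintegral_tendsto_of_tendsto_of_monotone (fun n => (hmin n).1.aemeasurable.ennreal_ofReal)
      (.of_forall fun x m n hmn => ENNReal.ofReal_le_ofReal (min_le_min_left _ (by gcongr)))
      (.of_forall fun x => (ENNReal.continuous_ofReal.tendsto _).comp <|
        tendsto_const_nhds.congr' <| (eventually_ge_atTop ⌈f x⌉₊).mono fun n hn =>
          (min_eq_left ((Nat.le_ceil _).trans (Nat.cast_le.mpr hn))).symm)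
  refine lt_of_le_of_lt (b := ENNReal.ofReal M) (le_of_tendsto' hlim fun n => ?_)
    ENNReal.ofReal_lt_top
  rw [← ofReal_integral_eq_lintegral_ofReal (hmin n)]
  · exact ENNReal.ofReal_le_ofReal (hM n)
  · filter_upwards [hf₀] with x hx using le_min hx n.cast_nonneg

lemma integrable_of_forall_integral_clip_le [IsFiniteMeasure μ] (hf : AEStronglyMeasurable f μ)
    (hneg : Integrable (fun x => max (-f x) 0) μ) {M : ℝ}
    (hM : ∀ n : ℕ, ∫ x, clip n (f x) ∂μ ≤ M) : Integrable f μ := by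
  have hpos : Integrable (fun x => max (f x) 0) μ := by
    refine integrable_of_forall_integral_min_le (by fun_prop) (.of_forall fun x => le_max_right _ _)
      (M := M + ∫ x, max (-f x) 0 ∂μ) fun n => ?_
    calc ∫ x, min (max (f x) 0) n ∂μ ≤ ∫ x, (clip n (f x) + max (-f x) 0) ∂μ :=
          integral_mono_of_nonneg (.of_forall fun x => le_min (le_max_right _ _) n.cast_nonneg)
            ((integrable_clip hf n).add hneg)
            (.of_forall fun x => min_max_zero_le_clip_add n.cast_nonneg)
      _ = ∫ x, clip n (f x) ∂μ + ∫ x, max (-f x) 0 ∂μ := integral_add (integrable_clip hf n) hneg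
      _ ≤ M + ∫ x, max (-f x) 0 ∂μ := by gcongr; exact hM n
  exact (hpos.sub hneg).congr (.of_forall fun x => max_zero_sub_max_neg_zero_eq_self (f x))

end Integral

section LLR

variable {α : Type*} [MeasurableSpace α] {μ ν : Measure α}

lemma integrable_max_neg_llr_zero [SigmaFinite μ] [IsFiniteMeasure ν] (hμν : μ ≪ ν) :
    Integrable (fun x => max (-llr μ ν x) 0) μ := by
  rw [← integrable_rnDeriv_smul_iff hμν]
  -- `t * max (-log t) 0 ≤ 1` for `t ≥ 0`, since `t - 1 ≤ t * log t`
  refine .of_bound (by fun_prop) 1 (.of_forall fun x => ?_)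
  have ht : 0 ≤ (μ.rnDeriv ν x).toReal := ENNReal.toReal_nonneg
  have := self_sub_one_le_mul_log ht
  rw [smul_eq_mul, llr, Real.norm_eq_abs, abs_of_nonneg (by positivity), mul_max_of_nonneg _ _ ht]
  exact max_le (by linarith) (by simp)

lemma integral_sub_log_integral_exp_le_integral_llr [IsProbabilityMeasure μ]
    [IsProbabilityMeasure ν] (hμν : μ ≪ ν) (h_int : Integrable (llr μ ν) μ) {f : α → ℝ}
    (hfμ : Integrable f μ) (hfν : Integrable (fun x => exp (f x)) ν) :
    ∫ x, f x ∂μ - log (∫ x, exp (f x) ∂ν) ≤ ∫ x, llr μ ν x ∂μ := by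
  have := isProbabilityMeasure_tilted hfν
  -- Gibbs' inequality for `μ` against the tilted measure `ν.tilted f`
  have hgibbs := InformationTheory.integral_llr_add_sub_measure_univ_nonneg
    (hμν.trans (absolutelyContinuous_tilted hfν)) (integrable_llr_tilted_right hμν hfμ h_int hfν)
  rw [integral_llr_tilted_right hμν hfμ hfν h_int] at hgibbs
  simp only [probReal_univ, add_sub_cancel_right] at hgibbs
  linarith

end LLR

section DonskerVaradhan

variable {α : Type*} [MeasurableSpace α] {μ ν : Measure α}

def donskerVaradhanSet (μ ν : Measure α) : Set ℝ :=
  {r | ∃ X : α → ℝ, Measurable X ∧ Integrable X μ ∧ Integrable (fun x => exp (X x)) ν ∧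
    r = ∫ x, X x ∂μ - log (∫ x, exp (X x) ∂ν)}

lemma le_integral_llr_of_mem_donskerVaradhanSet [IsProbabilityMeasure μ] [IsProbabilityMeasure ν]
    (hμν : μ ≪ ν) (h_int : Integrable (llr μ ν) μ) {r : ℝ} (hr : r ∈ donskerVaradhanSet μ ν) :
    r ≤ ∫ x, llr μ ν x ∂μ := by
  obtain ⟨X, -, hXμ, hXν, rfl⟩ := hr
  exact integral_sub_log_integral_exp_le_integral_llr hμν h_int hXμ hXν

/-- Off the support of `dμ/dν` the value `-n`, rather than `clip n (log 0) = 0`, makes `exp` of it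
tend to `dμ/dν = 0` there; this matters because `ν` may charge that set. -/
noncomputable def truncatedLLR (μ ν : Measure α) (n : ℕ) (x : α) : ℝ :=
  if 0 < (μ.rnDeriv ν x).toReal then clip n (llr μ ν x) else -n

lemma measurable_truncatedLLR (μ ν : Measure α) (n : ℕ) : Measurable (truncatedLLR μ ν n) :=
  Measurable.ite (measurableSet_lt measurable_const (μ.measurable_rnDeriv ν).ennreal_toReal)
    (by unfold clip; fun_prop) measurable_const

lemma abs_truncatedLLR_le (n : ℕ) (x : α) : |truncatedLLR μ ν n x| ≤ n := by
  unfold truncatedLLR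
  split_ifs
  · exact abs_clip_le n.cast_nonneg
  · simp

lemma truncatedLLR_ae_eq [SigmaFinite μ] [SigmaFinite ν] (hμν : μ ≪ ν) (n : ℕ) :
    truncatedLLR μ ν n =ᵐ[μ] fun x => clip n (llr μ ν x) := by
  filter_upwards [Measure.rnDeriv_pos hμν, hμν.ae_le (Measure.rnDeriv_lt_top μ ν)] with x h0 htop
  exact if_pos (ENNReal.toReal_pos h0.ne' htop.ne)

lemma exp_truncatedLLR_le (n : ℕ) (x : α) :
    exp (truncatedLLR μ ν n x) ≤ (μ.rnDeriv ν x).toReal + exp (-n) := by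
  unfold truncatedLLR
  split_ifs with h
  · simpa only [llr, exp_log h] using exp_clip_le (n := n) (x := llr μ ν x)
  · linarith [(μ.rnDeriv ν x).toReal_nonneg]

lemma exists_mem_donskerVaradhanSet_ge [IsProbabilityMeasure μ] [IsProbabilityMeasure ν]
    (hμν : μ ≪ ν) (n : ℕ) :
    ∃ r ∈ donskerVaradhanSet μ ν, ∫ x, clip n (llr μ ν x) ∂μ - exp (-n) ≤ r := by
  have hX := measurable_truncatedLLR μ ν n
  have hexp : Integrable (fun x => exp (truncatedLLR μ ν n x)) ν :=
    .of_bound (by fun_prop) (exp n) (.of_forall fun x => by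
      rw [Real.norm_eq_abs, abs_exp]
      exact exp_le_exp.mpr (abs_le.mp (abs_truncatedLLR_le n x)).2)
  refine ⟨_, ⟨truncatedLLR μ ν n, hX,
    .of_bound hX.aestronglyMeasurable n (.of_forall (abs_truncatedLLR_le n)), hexp, rfl⟩, ?_⟩
  have hZ : ∫ x, exp (truncatedLLR μ ν n x) ∂ν ≤ 1 + exp (-n) := by
    calc ∫ x, exp (truncatedLLR μ ν n x) ∂ν ≤ ∫ x, ((μ.rnDeriv ν x).toReal + exp (-n)) ∂ν :=
          integral_mono hexp (Measure.integrable_toReal_rnDeriv.add (integrable_const _))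
            (exp_truncatedLLR_le n)
      _ = 1 + exp (-n) := by
          rw [integral_add Measure.integrable_toReal_rnDeriv (integrable_const _),
            Measure.integral_toReal_rnDeriv hμν]
          simp
  have hlog : log (∫ x, exp (truncatedLLR μ ν n x) ∂ν) ≤ exp (-n) :=
    calc _ ≤ log (1 + exp (-n)) := log_le_log (integral_exp_pos hexp) hZ
      _ ≤ exp (-n) := by linarith [log_le_sub_one_of_pos (by positivity : 0 < 1 + exp (-(n : ℝ)))]
  rw [integral_congr_ae (truncatedLLR_ae_eq hμν n)]
  linarith

end DonskerVaradhan

/-- Donsker–Varadhan: for probability measures `p ≪ q` on a measurable space,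
`D_KL(p‖q) = ∫ ln(dp/dq) dp` equals the supremum over measurable `X : Ω → ℝ` with `E_p[X]`
and `E_q[exp X]` well-defined (integrable) of `E_p[X] − ln E_q[exp X]`. -/
theorem stmt_0 {Ω : Type*} [MeasurableSpace Ω] (p q : Measure Ω)
    [IsProbabilityMeasure p] [IsProbabilityMeasure q] (hpq : p ≪ q) :
    ∫ ω, Real.log ((p.rnDeriv q ω).toReal) ∂p =
      sSup {r : ℝ | ∃ X : Ω → ℝ, Measurable X ∧ Integrable X p ∧
        Integrable (fun ω => Real.exp (X ω)) q ∧
        r = (∫ ω, X ω ∂p) - Real.log (∫ ω, Real.exp (X ω) ∂q)} := by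
  show ∫ ω, llr p q ω ∂p = sSup (donskerVaradhanSet p q)
  choose r hr hle using exists_mem_donskerVaradhanSet_ge hpq
  by_cases h_int : Integrable (llr p q) p
  · have hub : ∀ s ∈ donskerVaradhanSet p q, s ≤ ∫ ω, llr p q ω ∂p := fun _ =>
      le_integral_llr_of_mem_donskerVaradhanSet hpq h_int
    have hlim : Tendsto (fun n : ℕ => ∫ ω, clip n (llr p q ω) ∂p - exp (-n)) atTop
        (𝓝 (∫ ω, llr p q ω ∂p - 0)) :=
      (tendsto_integral_clip h_int).sub
        (tendsto_exp_neg_atTop_nhds_zero.comp tendsto_natCast_atTop_atTop)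
    rw [sub_zero] at hlim
    refine (IsLUB.csSup_eq ⟨hub, fun b hb => ?_⟩ ⟨_, hr 0⟩).symm
    exact le_of_tendsto' hlim fun n => (hle n).trans (hb (hr n))
  · rw [integral_undef h_int, Real.sSup_of_not_bddAbove]
    rintro ⟨M, hM⟩
    refine h_int (integrable_of_forall_integral_clip_le (measurable_llr p q).aestronglyMeasurable
      (integrable_max_neg_llr_zero hpq) (M := M + 1) fun n => ?_)
    have : exp (-(n : ℝ)) ≤ 1 := exp_le_one_iff.mpr (by simp)
    linarith [hle n, hM (hr n)]
end

section
/- Let X ~ N(μ, σ²) be a Gaussian random variable and B an event with P(B) > 0. Then E[X | B] ≤ μ + σ·sqrt(−2 ln P(B)). -/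
open MeasureTheory ProbabilityTheory NNReal Filter Topology

/-!
For every `t`, Jensen's inequality for `exp` under `P[|B]` together with
`∫_B exp (t X) dP ≤ E[exp (t X)]` gives `t E[X | B] ≤ Λ(t) - log P(B)`, with `Λ` the cumulant
generating function of `X`. For `X ~ N(m, σ²)` this reads
`E[X | B] - m ≤ σ² t / 2 + (-log P(B)) / t` for all `t > 0`, and the infimum of the right-hand
side over `t` is `σ √(-2 log P(B))`, the inverse of the rate function `s ↦ s² / (2σ²)`.
-/

namespace ProbabilityTheory

variable {Ω : Type*} [MeasurableSpace Ω] {P : Measure Ω} {X : Ω → ℝ} {B : Set Ω}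

lemma integral_cond_eq_inv_mul_setIntegral (f : Ω → ℝ) :
    ∫ ω, f ω ∂P[|B] = (P.real B)⁻¹ * ∫ ω in B, f ω ∂P := by
  rw [cond, integral_smul_measure, ENNReal.toReal_inv, smul_eq_mul, measureReal_def]

lemma _root_.MeasureTheory.Integrable.cond {f : Ω → ℝ} (hf : Integrable f P) :
    Integrable f P[|B] := by
  rcases eq_or_ne (P B) 0 with hB | hB
  · rw [ProbabilityTheory.cond, Measure.restrict_eq_zero.mpr hB, smul_zero]
    exact integrable_zero_measure
  · exact hf.restrict.smul_measure (ENNReal.inv_ne_top.mpr hB)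

lemma mul_integral_cond_le_cgf_sub_log [IsFiniteMeasure P] (hPB : P B ≠ 0) (hX : Integrable X P)
    {t : ℝ} (ht : Integrable (fun ω ↦ Real.exp (t * X ω)) P) :
    t * ∫ ω, X ω ∂P[|B] ≤ cgf X P t - Real.log (P.real B) := by
  have : IsProbabilityMeasure P[|B] := cond_isProbabilityMeasure hPB
  have hPB_pos : 0 < P.real B := ENNReal.toReal_pos hPB (measure_ne_top P B)
  have h_jensen : Real.exp (t * ∫ ω, X ω ∂P[|B]) ≤ ∫ ω, Real.exp (t * X ω) ∂P[|B] := by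
    rw [← integral_const_mul]
    exact convexOn_exp.map_integral_le Real.continuous_exp.continuousOn isClosed_univ
      (ae_of_all _ fun _ ↦ Set.mem_univ _) (hX.cond.const_mul t) ht.cond
  have h_restrict : ∫ ω, Real.exp (t * X ω) ∂P[|B] ≤ (P.real B)⁻¹ * mgf X P t := by
    rw [integral_cond_eq_inv_mul_setIntegral]
    gcongr
    exact setIntegral_le_integral ht (ae_of_all _ fun _ ↦ (Real.exp_pos _).le)
  have h_mgf : 0 < mgf X P t := mgf_pos' (fun hP ↦ hPB (by simp [hP])) ht
  calc t * ∫ ω, X ω ∂P[|B]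
      = Real.log (Real.exp (t * ∫ ω, X ω ∂P[|B])) := (Real.log_exp _).symm
    _ ≤ Real.log ((P.real B)⁻¹ * mgf X P t) :=
      Real.log_le_log (Real.exp_pos _) (h_jensen.trans h_restrict)
    _ = cgf X P t - Real.log (P.real B) := by
      rw [Real.log_mul (by positivity) h_mgf.ne', Real.log_inv, cgf]
      ring

lemma le_mul_sqrt_of_forall_pos {x σ b : ℝ} (hσ : 0 ≤ σ) (hb : 0 ≤ b)
    (h : ∀ t > 0, x ≤ σ ^ 2 * t / 2 + b / t) : x ≤ σ * √(2 * b) := by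
  -- With `σ + ε, b + ε > 0` the optimal `t = √(2 (b + ε)) / (σ + ε)` exists; then let `ε → 0`.
  have h_perturbed : ∀ ε > 0, x ≤ (σ + ε) * √(2 * (b + ε)) := by
    intro ε hε
    set s := √(2 * (b + ε))
    have hs : 0 < s := Real.sqrt_pos.mpr (by positivity)
    have hs_sq : s ^ 2 = 2 * (b + ε) := Real.sq_sqrt (by positivity)
    calc x ≤ σ ^ 2 * (s / (σ + ε)) / 2 + b / (s / (σ + ε)) := h _ (by positivity)
      _ ≤ (σ + ε) ^ 2 * (s / (σ + ε)) / 2 + (b + ε) / (s / (σ + ε)) := by gcongr <;> linarith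
      _ = (σ + ε) * s := by
        field_simp
        linear_combination -hs_sq
  have h_lim : Tendsto (fun ε ↦ (σ + ε) * √(2 * (b + ε))) (𝓝[>] 0) (𝓝 (σ * √(2 * b))) :=
    ((by fun_prop : Continuous fun ε : ℝ ↦ (σ + ε) * √(2 * (b + ε))).tendsto' 0 _
      (by simp)).mono_left nhdsWithin_le_nhds
  exact ge_of_tendsto h_lim (eventually_nhdsWithin_of_forall h_perturbed)

lemma integral_cond_sub_le_of_map_eq_gaussianReal [IsProbabilityMeasure P] {m : ℝ} {v : ℝ≥0}
    (hX : P.map X = gaussianReal m v) (hPB : P B ≠ 0) {t : ℝ} (ht : 0 < t) :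
    ∫ ω, X ω ∂P[|B] - m ≤ v * t / 2 + -Real.log (P.real B) / t := by
  have h_exp (s : ℝ) : Integrable (fun ω ↦ Real.exp (s * X ω)) P :=
    mgf_pos_iff.mp (by rw [mgf_gaussianReal hX]; positivity)
  have h_int : Integrable X P :=
    integrable_of_mem_interior_integrableExpSet (by simp [integrableExpSet, h_exp])
  have h_bound := mul_integral_cond_le_cgf_sub_log hPB h_int (h_exp t)
  rw [cgf_gaussianReal hX] at h_bound
  calc ∫ ω, X ω ∂P[|B] - m = (t * ∫ ω, X ω ∂P[|B] - m * t) / t := by field_simp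
    _ ≤ (v * t ^ 2 / 2 - Real.log (P.real B)) / t :=
      div_le_div_of_nonneg_right (by linarith) ht.le
    _ = v * t / 2 + -Real.log (P.real B) / t := by field_simp; ring

end ProbabilityTheory

theorem stmt_3_general {Ω : Type*} [MeasurableSpace Ω] (P : Measure Ω) [IsProbabilityMeasure P]
    (X : Ω → ℝ) (m : ℝ) (σ : ℝ≥0)
    (hGauss : Measure.map X P = gaussianReal m (σ ^ 2))
    (B : Set Ω) (hBpos : 0 < P B) :
    ∫ ω, X ω ∂(P[|B]) ≤ m + σ * Real.sqrt (-2 * Real.log (P B).toReal) := by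
  have h_log : 0 ≤ -Real.log (P.real B) :=
    neg_nonneg.mpr (Real.log_nonpos measureReal_nonneg measureReal_le_one)
  have h := le_mul_sqrt_of_forall_pos (x := ∫ ω, X ω ∂P[|B] - m) σ.coe_nonneg h_log
    fun t ht ↦ by exact_mod_cast integral_cond_sub_le_of_map_eq_gaussianReal hGauss hBpos.ne' ht
  rw [measureReal_def] at h
  rw [neg_mul_comm]
  linarith

/-- if `X ~ N(μ, σ²)` and `B` is an event with `P(B) > 0`, then
`E[X | B] ≤ μ + σ sqrt(−2 ln P(B))`. -/
theorem stmt_3 {Ω : Type*} [MeasurableSpace Ω] (P : Measure Ω) [IsProbabilityMeasure P]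
    (X : Ω → ℝ) (hXm : Measurable X) (m : ℝ) (σ : ℝ≥0)
    (hGauss : Measure.map X P = gaussianReal m (σ ^ 2))
    (B : Set Ω) (hB : MeasurableSet B) (hBpos : 0 < P B) :
    ∫ ω, X ω ∂(P[|B]) ≤ m + σ * Real.sqrt (-2 * Real.log (P B).toReal) :=
  stmt_3_general P X m σ hGauss B hBpos
end

section
/- Let R ~ N(μ, K) be a multivariate Gaussian over a finite index set X with σ_x := sqrt(K_{x,x}). Define R* := max_x R_x and p*_x := P[R_x = R*]. Then E[R*] ≤ Σ_x p*_x (μ_x + σ_x sqrt(−2 ln p*_x)), i.e., E[R*] ≤ V(p*) ≤ max_{p ∈ Δ^{|X|−1}} V(p). -/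
/-!
On the event `{R_x = R*}` the maximum equals `R_x`, and these events cover `Ω` and overlap only on
null sets, so `E[R*] = Σ_x E[R_x; R_x = R*]`. Each term is bounded by a Chernoff argument: for
`Z ~ N(m, σ²)` and an event `A` of probability `p > 0`, Jensen's inequality for `exp` under
`P(· | A)` together with `E[e^{tZ}; A] ≤ E[e^{tZ}] = e^{mt + σ²t²/2}` gives
`t E[Z; A] ≤ p (mt + σ²t²/2 − log p)` for all `t > 0`, and optimising over `t` yields
`E[Z; A] ≤ p (m + σ √(−2 log p))`. The probabilities `p*_x` form a point of the simplex, on which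
`V` is bounded because `q √(−2 log q) ≤ 1`.
-/

open MeasureTheory ProbabilityTheory Matrix

/-- The VBOS objective `V(p) = Σ_x p_x (μ_x + σ_x sqrt(−2 ln p_x))`. -/
noncomputable def vbos {X : Type*} [Fintype X] (μ σ : X → ℝ) (p : X → ℝ) : ℝ :=
  ∑ x, p x * (μ x + σ x * Real.sqrt (-2 * Real.log (p x)))

/-- `R` is a Gaussian random vector with mean `μ` and covariance `K`: every linear
combination of its coordinates is a real Gaussian with the corresponding mean and variance. -/
def IsGaussianVector {Ω X : Type*} [MeasurableSpace Ω] [Fintype X]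
    (P : Measure Ω) (R : X → Ω → ℝ) (μ : X → ℝ) (K : Matrix X X ℝ) : Prop :=
  ∀ w : X → ℝ,
    Measure.map (fun ω => ∑ x, w x * R x ω) P =
      gaussianReal (∑ x, w x * μ x) (w ⬝ᵥ (K *ᵥ w)).toNNReal

open Real

lemma le_two_mul_sqrt_mul_of_forall_le_mul_add_div {E a b : ℝ} (ha : 0 ≤ a) (hb : 0 ≤ b)
    (h : ∀ t > 0, E ≤ a * t + b / t) : E ≤ 2 * √(a * b) := by
  by_contra! hE
  have hE0 : 0 < E := lt_of_le_of_lt (by positivity) hE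
  rcases ha.eq_or_lt with rfl | ha
  · have h' := h ((b + 1) / E) (by positivity)
    rw [zero_mul, zero_add, div_div_eq_mul_div, le_div_iff₀ (by positivity)] at h'
    nlinarith
  · have h' := h (E / (2 * a)) (by positivity)
    have hsq : E ^ 2 ≤ 4 * (a * b) := by
      rw [div_div_eq_mul_div] at h'
      field_simp at h'
      nlinarith
    nlinarith [sq_sqrt (mul_nonneg ha.le hb), sqrt_nonneg (a * b)]

lemma sqrt_coe_toNNReal (x : ℝ) : √(x.toNNReal : ℝ) = √x := by
  rw [Real.sqrt, Real.sqrt, Real.toNNReal_coe]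

lemma mul_sqrt_neg_two_mul_log_le_one {q : ℝ} (hq : 0 ≤ q) : q * √(-2 * log q) ≤ 1 := by
  have hlog : q ^ 2 * (-2 * log q) ≤ 1 := by
    have := self_sub_one_le_mul_log (sq_nonneg q)
    rw [log_pow] at this
    push_cast at this
    nlinarith [sq_nonneg q]
  calc q * √(-2 * log q) = √(q ^ 2 * (-2 * log q)) := by
        rw [sqrt_mul (sq_nonneg q), sqrt_sq hq]
    _ ≤ √1 := sqrt_le_sqrt hlog
    _ = 1 := sqrt_one

lemma mul_setIntegral_le_measureReal_mul_cgf_sub_log {Ω : Type*} [MeasurableSpace Ω]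
    {P : Measure Ω} [IsFiniteMeasure P] {Z : Ω → ℝ} {A : Set Ω} {t : ℝ} (hA : P A ≠ 0)
    (hZ : Integrable Z P) (hexp : Integrable (fun ω => exp (t * Z ω)) P) :
    t * ∫ ω in A, Z ω ∂P ≤ P.real A * (cgf Z P t - log (P.real A)) := by
  have hp : 0 < P.real A := ENNReal.toReal_pos hA (measure_ne_top P A)
  have hmgf_pos : 0 < mgf Z P t := mgf_pos' (fun h => hA (by simp [h])) hexp
  have jensen : exp (⨍ ω in A, t * Z ω ∂P) ≤ ⨍ ω in A, exp (t * Z ω) ∂P :=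
    convexOn_exp.map_set_average_le continuous_exp.continuousOn isClosed_univ hA
      (measure_ne_top P A) (by simp) (hZ.const_mul t).integrableOn hexp.integrableOn
  have hmgf : ∫ ω in A, exp (t * Z ω) ∂P ≤ mgf Z P t :=
    setIntegral_le_integral hexp (Filter.Eventually.of_forall fun ω => (exp_pos _).le)
  rw [setAverage_eq, setAverage_eq, integral_const_mul, smul_eq_mul, smul_eq_mul] at jensen
  have hlog :=
    log_le_log (exp_pos _) (jensen.trans (mul_le_mul_of_nonneg_left hmgf (by positivity)))
  rw [log_exp, log_mul (by positivity) hmgf_pos.ne', log_inv, ← cgf,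
    inv_mul_le_iff₀ hp] at hlog
  linarith

lemma setIntegral_le_of_hasLaw_gaussianReal {Ω : Type*} [MeasurableSpace Ω] {P : Measure Ω}
    {Z : Ω → ℝ} {m : ℝ} {v : NNReal} (hZ : HasLaw Z (gaussianReal m v) P) (A : Set Ω) :
    ∫ ω in A, Z ω ∂P ≤ P.real A * (m + √v * √(-2 * log (P.real A))) := by
  have := hZ.isProbabilityMeasure
  rcases eq_or_ne (P A) 0 with hA | hA
  · simp [Measure.restrict_eq_zero.2 hA, measureReal_def, hA]
  set p := P.real A
  have hp : 0 < p := ENNReal.toReal_pos hA (measure_ne_top P A)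
  have hlogp : log p ≤ 0 := log_nonpos hp.le measureReal_le_one
  have chernoff : ∀ t > 0, ∫ ω in A, Z ω ∂P - p * m ≤ p * v / 2 * t + -(p * log p) / t := by
    intro t ht
    have hexp : Integrable (fun ω => exp (t * Z ω)) P :=
      mgf_pos_iff.1 (by rw [mgf_gaussianReal hZ.map_eq]; positivity)
    have := mul_setIntegral_le_measureReal_mul_cgf_sub_log hA hZ.hasGaussianLaw.integrable hexp
    rw [cgf_gaussianReal hZ.map_eq] at this
    rw [← sub_nonneg]
    have hgap : p * v / 2 * t + -(p * log p) / t - (∫ ω in A, Z ω ∂P - p * m)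
        = t⁻¹ * (p * (m * t + v * t ^ 2 / 2 - log p) - t * ∫ ω in A, Z ω ∂P) := by
      field_simp; ring
    rw [hgap]
    exact mul_nonneg (by positivity) (by linarith)
  have := le_two_mul_sqrt_mul_of_forall_le_mul_add_div (by positivity) (by nlinarith) chernoff
  rw [show p * v / 2 * -(p * log p) = (p / 2) ^ 2 * (v * (-2 * log p)) by ring,
    sqrt_mul (sq_nonneg _), sqrt_sq (by positivity), sqrt_mul v.coe_nonneg] at this
  linarith

lemma IsGaussianVector.hasLaw_apply {Ω X : Type*} [MeasurableSpace Ω] [Fintype X]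
    {P : Measure Ω} {R : X → Ω → ℝ} {μ : X → ℝ} {K : Matrix X X ℝ}
    (hR : IsGaussianVector P R μ K) (x : X) :
    HasLaw (R x) (gaussianReal (μ x) (K x x).toNNReal) P := by
  classical
  have hmap := hR (Pi.single x 1)
  simp only [single_dotProduct, mulVec_single_one, one_mul, col_apply] at hmap
  simp only [Pi.single_apply, ite_mul, one_mul, zero_mul, Finset.sum_ite_eq', Finset.mem_univ,
    if_true] at hmap
  exact ⟨aemeasurable_of_map_neZero (by rw [hmap]; infer_instance), hmap⟩

lemma iUnion_setOf_eq_iSup {α ι : Type*} [Finite ι] [Nonempty ι] (f : ι → α → ℝ) :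
    ⋃ i, {a | f i a = ⨆ j, f j a} = Set.univ :=
  Set.eq_univ_of_forall fun a => Set.mem_iUnion.2 (exists_eq_ciSup_of_finite (f := (f · a)))

section ArgmaxPartition

variable {Ω ι : Type*} [MeasurableSpace Ω] {P : Measure Ω} {f : ι → Ω → ℝ}

lemma pairwise_aedisjoint_setOf_eq_iSup (hties : ∀ i j, i ≠ j → P {ω | f i ω = f j ω} = 0) :
    Pairwise (Function.onFun (AEDisjoint P) fun i => {ω | f i ω = ⨆ j, f j ω}) := fun i j hij =>
  measure_mono_null (fun _ hω => hω.1.trans hω.2.symm) (hties i j hij)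

variable [Fintype ι] [Nonempty ι]

lemma sum_measureReal_setOf_eq_iSup [IsProbabilityMeasure P] (hf : ∀ i, Measurable (f i))
    (hties : ∀ i j, i ≠ j → P {ω | f i ω = f j ω} = 0) :
    ∑ i, P.real {ω | f i ω = ⨆ j, f j ω} = 1 := by
  have h := measure_iUnion₀ (pairwise_aedisjoint_setOf_eq_iSup hties)
    fun i => (measurableSet_eq_fun (hf i) (Measurable.iSup hf)).nullMeasurableSet
  rw [iUnion_setOf_eq_iSup, measure_univ, tsum_fintype] at h
  simp only [measureReal_def]
  rw [← ENNReal.toReal_sum fun i _ => measure_ne_top P _, ← h, ENNReal.toReal_one]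

lemma integral_iSup_eq_sum_setIntegral (hf : ∀ i, Measurable (f i))
    (hint : ∀ i, Integrable (f i) P) (hties : ∀ i j, i ≠ j → P {ω | f i ω = f j ω} = 0) :
    ∫ ω, ⨆ i, f i ω ∂P = ∑ i, ∫ ω in {ω | f i ω = ⨆ j, f j ω}, f i ω ∂P := by
  have hA i : MeasurableSet {ω | f i ω = ⨆ j, f j ω} :=
    measurableSet_eq_fun (hf i) (Measurable.iSup hf)
  have hsup_eq i : Set.EqOn (fun ω => ⨆ j, f j ω) (f i) {ω | f i ω = ⨆ j, f j ω} :=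
    fun _ hω => hω.symm
  have hint_sup : IntegrableOn (fun ω => ⨆ j, f j ω) (⋃ i, {ω | f i ω = ⨆ j, f j ω}) P :=
    integrableOn_finite_iUnion.2 fun i => (hint i).integrableOn.congr_fun (hsup_eq i).symm (hA i)
  rw [← setIntegral_univ, ← iUnion_setOf_eq_iSup f,
    integral_iUnion_ae (fun i => (hA i).nullMeasurableSet)
      (pairwise_aedisjoint_setOf_eq_iSup hties) hint_sup, tsum_fintype]
  exact Finset.sum_congr rfl fun i _ => setIntegral_congr_fun (hA i) (hsup_eq i)

end ArgmaxPartition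

lemma vbos_le_of_mem_stdSimplex {X : Type*} [Fintype X] (μ : X → ℝ) {σ : X → ℝ} (hσ : 0 ≤ σ)
    {p : X → ℝ} (hp : p ∈ stdSimplex ℝ X) : vbos μ σ p ≤ ∑ x, (|μ x| + σ x) := by
  refine Finset.sum_le_sum fun x _ => ?_
  have hp0 := hp.1 x
  have hp1 : p x ≤ 1 := hp.2 ▸ Finset.single_le_sum (fun y _ => hp.1 y) (Finset.mem_univ x)
  have hμ : p x * μ x ≤ |μ x| := by
    calc p x * μ x ≤ p x * |μ x| := mul_le_mul_of_nonneg_left (le_abs_self _) hp0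
      _ ≤ |μ x| := mul_le_of_le_one_left (abs_nonneg _) hp1
  have hσx := mul_le_mul_of_nonneg_left (mul_sqrt_neg_two_mul_log_le_one hp0) (hσ x)
  linarith [show p x * (μ x + σ x * √(-2 * log (p x))) =
    p x * μ x + σ x * (p x * √(-2 * log (p x))) by ring]

theorem stmt_4_general {Ω X : Type*} [MeasurableSpace Ω] [Fintype X] [Nonempty X]
    (P : Measure Ω) [IsProbabilityMeasure P] (R : X → Ω → ℝ)
    (hmeas : ∀ x, Measurable (R x)) (μ : X → ℝ) (K : Matrix X X ℝ)
    (hGauss : IsGaussianVector P R μ K)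
    (hties : ∀ x z, x ≠ z → P {ω | R x ω = R z ω} = 0) :
    (∫ ω, (⨆ x, R x ω) ∂P ≤
        vbos μ (fun x => Real.sqrt (K x x))
          (fun x => (P {ω | R x ω = ⨆ z, R z ω}).toReal)) ∧
      vbos μ (fun x => Real.sqrt (K x x))
          (fun x => (P {ω | R x ω = ⨆ z, R z ω}).toReal) ≤
        sSup ((vbos μ fun x => Real.sqrt (K x x)) '' stdSimplex ℝ X) := by
  have hlaw := hGauss.hasLaw_apply
  have hp : (fun x => (P {ω | R x ω = ⨆ z, R z ω}).toReal) ∈ stdSimplex ℝ X :=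
    ⟨fun _ => ENNReal.toReal_nonneg, sum_measureReal_setOf_eq_iSup hmeas hties⟩
  have hbdd : BddAbove ((vbos μ fun x => √(K x x)) '' stdSimplex ℝ X) :=
    ⟨_, Set.forall_mem_image.2 fun _ hq => vbos_le_of_mem_stdSimplex μ (fun _ => sqrt_nonneg _) hq⟩
  refine ⟨?_, le_csSup hbdd (Set.mem_image_of_mem _ hp)⟩
  calc ∫ ω, ⨆ x, R x ω ∂P = ∑ x, ∫ ω in {ω | R x ω = ⨆ z, R z ω}, R x ω ∂P :=
        integral_iSup_eq_sum_setIntegral hmeas (fun x => (hlaw x).hasGaussianLaw.integrable) hties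
    _ ≤ _ := Finset.sum_le_sum fun x _ => by
        simpa only [sqrt_coe_toNNReal, measureReal_def] using
          setIntegral_le_of_hasLaw_gaussianReal (hlaw x) _

/-- for a Gaussian vector `R ~ N(μ, K)` over a finite set, with
`R* = max_x R_x`, `p*_x = P[R_x = R*]` (ties having probability zero), one has
`E[R*] ≤ V(p*) ≤ max_{p ∈ simplex} V(p)` where
`V(p) = Σ_x p_x (μ_x + sqrt(K_{x,x}) sqrt(−2 ln p_x))`. -/
theorem stmt_4 {Ω X : Type*} [MeasurableSpace Ω] [Fintype X] [Nonempty X]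
    (P : Measure Ω) [IsProbabilityMeasure P] (R : X → Ω → ℝ)
    (hmeas : ∀ x, Measurable (R x)) (μ : X → ℝ) (K : Matrix X X ℝ) (hK : K.PosSemidef)
    (hGauss : IsGaussianVector P R μ K)
    (hties : ∀ x z, x ≠ z → P {ω | R x ω = R z ω} = 0) :
    (∫ ω, (⨆ x, R x ω) ∂P ≤
        vbos μ (fun x => Real.sqrt (K x x))
          (fun x => (P {ω | R x ω = ⨆ z, R z ω}).toReal)) ∧
      vbos μ (fun x => Real.sqrt (K x x))
          (fun x => (P {ω | R x ω = ⨆ z, R z ω}).toReal) ≤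
        sSup ((vbos μ fun x => Real.sqrt (K x x)) '' stdSimplex ℝ X) :=
  stmt_4_general P R hmeas μ K hGauss hties
end

section
/- For σ ∈ ℝ_+^{|X|}, the function f(p) := −Σ_x p_x σ_x sqrt(−2 ln p_x) is strictly convex and continuously differentiable on the interior of the simplex, and for any π in the probability simplex and the maximizer π̃ of V over the simplex, the Bregman divergence satisfies D_σ(π, π̃) = V(π̃) − V(π). -/
/-- `f(p) := −Σ_x p_x σ_x sqrt(−2 ln p_x)`. -/
noncomputable def fBreg {X : Type*} [Fintype X] (σ : X → ℝ) (p : X → ℝ) : ℝ :=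
  -∑ x, p x * σ x * Real.sqrt (-2 * Real.log (p x))

/-- The Bregman divergence of `f`: `D(p,q) = f(p) − f(q) − ⟨∇f(q), p − q⟩`. -/
noncomputable def bregman {X : Type*} [Fintype X] (σ : X → ℝ) (p q : X → ℝ) : ℝ :=
  fBreg σ p - fBreg σ q - fderiv ℝ (fBreg σ) q (p - q)

/-!
Each summand `t ↦ -σ t √(-2 log t)` of `f` has derivative `σ (1/s - s)` with `s = √(-2 log t)`
decreasing in `t`, so it is strictly convex on `(0, 1]` and `f` is strictly convex on the open
simplex. Since `V = ⟨μ, ·⟩ - f` and `t √(-2 log t)` has infinite slope at `0`, moving a little mass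
onto an empty coordinate increases `V`; hence the maximizer `π̃` has full support. Then `π̃` is a
critical point of `V` along every line of the simplex through it, i.e.
`∇f(π̃) (π - π̃) = ⟨μ, π - π̃⟩`, which turns `D_σ(π, π̃)` into `V(π̃) - V(π)`. When `X` is a
singleton the simplex is a point and there is nothing to prove.
-/

open Set Filter Topology

section

open Real

lemma strictAntiOn_sqrt_neg_two_mul_log : StrictAntiOn (fun t : ℝ => √(-2 * log t)) (Ioc 0 1) := by
  intro a ha b hb hab
  refine sqrt_lt_sqrt ?_ ?_
  · linarith [log_nonpos hb.1.le hb.2]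
  · linarith [log_lt_log ha.1 hab]

lemma tendsto_sqrt_neg_two_mul_log_nhdsGT_zero :
    Tendsto (fun t : ℝ => √(-2 * log t)) (𝓝[>] 0) atTop :=
  tendsto_sqrt_atTop.comp (tendsto_log_nhdsGT_zero.const_mul_atBot_of_neg (by norm_num))

lemma hasDerivAt_neg_mul_mul_sqrt_neg_two_mul_log (c : ℝ) {t : ℝ} (ht₀ : 0 < t) (ht₁ : t < 1) :
    HasDerivAt (fun t : ℝ => -(t * c * √(-2 * log t)))
      (c / √(-2 * log t) - c * √(-2 * log t)) t := by
  have hs : 0 < √(-2 * log t) := sqrt_pos.2 (by linarith [log_neg ht₀ ht₁])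
  have h := (((hasDerivAt_id' t).mul_const c).mul
    (((hasDerivAt_log ht₀.ne').const_mul (-2)).sqrt (sqrt_pos.1 hs).ne')).neg
  refine h.congr_deriv ?_
  field_simp
  ring

lemma strictConvexOn_neg_mul_mul_sqrt_neg_two_mul_log {c : ℝ} (hc : 0 < c) :
    StrictConvexOn ℝ (Ioc 0 1) (fun t : ℝ => -(t * c * √(-2 * log t))) := by
  refine StrictMonoOn.strictConvexOn_of_deriv (convex_Ioc 0 1) ?_ ?_
  · exact ContinuousOn.neg (by fun_prop (disch := exact fun t ht => ht.1.ne'))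
  rw [interior_Ioc]
  intro a ha b hb hab
  rw [(hasDerivAt_neg_mul_mul_sqrt_neg_two_mul_log c ha.1 ha.2).deriv,
    (hasDerivAt_neg_mul_mul_sqrt_neg_two_mul_log c hb.1 hb.2).deriv]
  have hs := strictAntiOn_sqrt_neg_two_mul_log ⟨ha.1, ha.2.le⟩ ⟨hb.1, hb.2.le⟩ hab
  have hsb : 0 < √(-2 * log b) := sqrt_pos.2 (by linarith [log_neg hb.1 hb.2])
  have := div_lt_div_of_pos_left hc hsb hs
  nlinarith

lemma strictConvexOn_univ_pi_sum {ι : Type*} [Fintype ι] {E : ι → Type*}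
    [∀ i, AddCommGroup (E i)] [∀ i, Module ℝ (E i)] {I : ∀ i, Set (E i)} {g : ∀ i, E i → ℝ}
    (hg : ∀ i, StrictConvexOn ℝ (I i) (g i)) :
    StrictConvexOn ℝ (univ.pi I) (fun p => ∑ i, g i (p i)) := by
  refine ⟨convex_pi fun i _ => (hg i).1, fun p hp q hq hpq a b ha hb hab => ?_⟩
  obtain ⟨i, hi⟩ := Function.ne_iff.1 hpq
  simp only [smul_eq_mul, Finset.mul_sum, ← Finset.sum_add_distrib, Pi.add_apply, Pi.smul_apply]
  exact Finset.sum_lt_sum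
    (fun j _ => (hg j).convexOn.2 (hp j trivial) (hq j trivial) ha.le hb.le hab)
    ⟨i, Finset.mem_univ i, (hg i).2 (hp i trivial) (hq i trivial) hi ha hb hab⟩

variable {X : Type*} [Fintype X]

lemma subsingleton_stdSimplex [Subsingleton X] : (stdSimplex ℝ X).Subsingleton := by
  intro p hp q hq
  funext x
  rw [← Fintype.sum_subsingleton p x, ← Fintype.sum_subsingleton q x, hp.2, hq.2]

lemma mem_Ioo_of_mem_stdSimplex [Nontrivial X] {p : X → ℝ} (hp : p ∈ stdSimplex ℝ X)
    (hpos : ∀ x, 0 < p x) (x : X) : p x ∈ Ioo 0 1 := by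
  obtain ⟨y, hy⟩ := exists_ne x
  have := Finset.add_le_sum (fun i _ => hp.1 i) (Finset.mem_univ x) (Finset.mem_univ y) hy.symm
  exact ⟨hpos x, by linarith [hp.2, hpos y]⟩

lemma add_smul_single_sub_single_mem_stdSimplex [DecidableEq X] {q : X → ℝ}
    (hq : q ∈ stdSimplex ℝ X) {x y : X} (hxy : x ≠ y) {ε : ℝ} (hε₀ : 0 ≤ ε) (hε₁ : ε ≤ q y) :
    q + ε • (Pi.single x 1 - Pi.single y 1) ∈ stdSimplex ℝ X := by
  refine ⟨fun z => ?_, ?_⟩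
  · rcases eq_or_ne z x with rfl | hzx
    · simp [hxy, add_nonneg (hq.1 z) hε₀]
    rcases eq_or_ne z y with rfl | hzy
    · simpa [hzx] using hε₁
    · simp [hzx, hzy, hq.1 z]
  · simp [Finset.sum_add_distrib, ← Finset.mul_sum, Finset.sum_sub_distrib, hq.2]

lemma eventually_add_smul_sub_mem_stdSimplex {p q : X → ℝ} (hp : p ∈ stdSimplex ℝ X)
    (hq : q ∈ stdSimplex ℝ X) (hpos : ∀ x, 0 < q x) :
    ∀ᶠ t in 𝓝 (0 : ℝ), q + t • (p - q) ∈ stdSimplex ℝ X := by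
  have hcoord : ∀ᶠ t in 𝓝 (0 : ℝ), ∀ x, 0 < q x + t * (p x - q x) := by
    refine eventually_all.2 fun x => ContinuousAt.eventually_lt continuousAt_const
      (by fun_prop) (by simpa using hpos x)
  filter_upwards [hcoord] with t ht
  refine ⟨fun x => (ht x).le, ?_⟩
  simp [Finset.sum_add_distrib, ← Finset.mul_sum, Finset.sum_sub_distrib, hp.2, hq.2]

lemma IsMaxOn.hasFDerivAt_apply_sub_eq_zero_of_stdSimplex {g : (X → ℝ) → ℝ}
    {g' : (X → ℝ) →L[ℝ] ℝ} {p q : X → ℝ} (hmax : IsMaxOn g (stdSimplex ℝ X) q)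
    (hg : HasFDerivAt g g' q) (hp : p ∈ stdSimplex ℝ X) (hq : q ∈ stdSimplex ℝ X)
    (hpos : ∀ x, 0 < q x) : g' (p - q) = 0 := by
  have hline : HasDerivAt (fun t : ℝ => q + t • (p - q)) (p - q) 0 := by
    simpa using ((hasDerivAt_id' (0 : ℝ)).smul_const (p - q)).const_add q
  have hloc : IsLocalMax (fun t : ℝ => g (q + t • (p - q))) 0 :=
    (eventually_add_smul_sub_mem_stdSimplex hp hq hpos).mono fun t ht => by simpa using hmax ht
  exact hloc.hasDerivAt_eq_zero (hg.comp_hasDerivAt_of_eq 0 hline (by simp))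

lemma fBreg_eq_sum (σ : X → ℝ) : fBreg σ = fun p => ∑ x, -(p x * σ x * √(-2 * log (p x))) := by
  funext p
  simp [fBreg]

lemma vbos_eq_sum_sub_fBreg (μ σ p : X → ℝ) : vbos μ σ p = ∑ x, p x * μ x - fBreg σ p := by
  simp [vbos, fBreg, mul_add, Finset.sum_add_distrib, mul_assoc]

lemma fBreg_strictConvexOn {σ : X → ℝ} (hσ : ∀ x, 0 < σ x) :
    StrictConvexOn ℝ {p ∈ stdSimplex ℝ X | ∀ x, 0 < p x} (fBreg σ) := by
  have hconv : Convex ℝ {p ∈ stdSimplex ℝ X | ∀ x, 0 < p x} := by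
    convert (convex_stdSimplex ℝ X).inter
      (convex_pi (s := univ) fun (x : X) _ => convex_Ioi (0 : ℝ)) using 1
    ext p
    simp
  rw [fBreg_eq_sum]
  refine (strictConvexOn_univ_pi_sum fun x =>
    strictConvexOn_neg_mul_mul_sqrt_neg_two_mul_log (hσ x)).subset ?_ hconv
  exact fun p hp x _ => ⟨hp.2 x, (mem_Icc_of_mem_stdSimplex hp.1 x).2⟩

lemma contDiffAt_fBreg (σ : X → ℝ) {n : WithTop ℕ∞} {p : X → ℝ} (hp : ∀ x, log (p x) ≠ 0) :
    ContDiffAt ℝ n (fBreg σ) p := by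
  refine (ContDiffAt.sum fun x _ => ?_).neg
  have hpx : p x ≠ 0 := fun h => hp x (by simp [h])
  fun_prop (disch := first | exact hpx | simpa using hp x)

lemma fBreg_contDiffOn (σ : X → ℝ) {n : WithTop ℕ∞} :
    ContDiffOn ℝ n (fBreg σ) {p ∈ stdSimplex ℝ X | ∀ x, 0 < p x} := by
  intro p hp
  rcases subsingleton_or_nontrivial X with hX | hX
  · exact contDiffWithinAt_singleton.mono fun q hq => subsingleton_stdSimplex hq.1 hp.1
  · refine (contDiffAt_fBreg σ fun x => ?_).contDiffWithinAt
    have := mem_Ioo_of_mem_stdSimplex hp.1 hp.2 x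
    exact (log_neg this.1 this.2).ne

lemma pos_of_isMaxOn_vbos {μ σ : X → ℝ} (hσ : ∀ x, 0 < σ x) {q : X → ℝ}
    (hq : q ∈ stdSimplex ℝ X) (hmax : IsMaxOn (vbos μ σ) (stdSimplex ℝ X) q) (x₀ : X) :
    0 < q x₀ := by
  classical
  by_contra! h
  have hx₀ : q x₀ = 0 := le_antisymm h (hq.1 x₀)
  obtain ⟨y, -, hy⟩ : ∃ y ∈ Finset.univ, (0 : X → ℝ) y < q y :=
    Finset.exists_lt_of_sum_lt (by simp [hq.2])
  rw [Pi.zero_apply] at hy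
  have hne : x₀ ≠ y := by rintro rfl; linarith
  set D := √(-2 * log (q y))
  -- Moving mass `ε` from `y` to `x₀` gains at least `ε (μ x₀ + σ x₀ √(-2 log ε) - μ y - σ y D)`.
  obtain ⟨ε, hεA, hε₀, hε₁⟩ :
      ∃ ε, (μ y + σ y * D - μ x₀) / σ x₀ < √(-2 * log ε) ∧ ε ∈ Ioo 0 (q y) :=
    ((tendsto_sqrt_neg_two_mul_log_nhdsGT_zero.eventually_gt_atTop _).and
      (Ioo_mem_nhdsGT hy)).exists
  have hy₁ := (mem_Icc_of_mem_stdSimplex hq y).2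
  have hB : D ≤ √(-2 * log (q y - ε)) :=
    strictAntiOn_sqrt_neg_two_mul_log.antitoneOn ⟨sub_pos.2 hε₁, by linarith⟩ ⟨hy, hy₁⟩
      (by linarith)
  set r := q + ε • (Pi.single x₀ 1 - Pi.single y 1)
  have hr : r ∈ stdSimplex ℝ X :=
    add_smul_single_sub_single_mem_stdSimplex hq hne hε₀.le hε₁.le
  have hgain : vbos μ σ r - vbos μ σ q = ε * (μ x₀ + σ x₀ * √(-2 * log ε))
      + ((q y - ε) * (μ y + σ y * √(-2 * log (q y - ε))) - q y * (μ y + σ y * D)) := by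
    rw [vbos, vbos, ← Finset.sum_sub_distrib, Fintype.sum_eq_add x₀ y hne]
    · simp [r, hne, hne.symm, hx₀, D, ← sub_eq_add_neg]
    · intro x hx
      simp [r, hx.1, hx.2]
  have hA := (div_lt_iff₀ (hσ x₀)).1 hεA
  have : vbos μ σ q < vbos μ σ r := by
    rw [← sub_pos, hgain]
    nlinarith [mul_le_mul_of_nonneg_left hB (mul_nonneg (sub_pos.2 hε₁).le (hσ y).le), hε₀]
  exact (hmax hr).not_gt this

lemma bregman_eq_vbos_sub_vbos_of_isMaxOn {μ σ q : X → ℝ} (hq : q ∈ stdSimplex ℝ X)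
    (hpos : ∀ x, 0 < q x) (hdiff : DifferentiableAt ℝ (fBreg σ) q)
    (hmax : IsMaxOn (vbos μ σ) (stdSimplex ℝ X) q) {p : X → ℝ} (hp : p ∈ stdSimplex ℝ X) :
    bregman σ p q = vbos μ σ q - vbos μ σ p := by
  set L : (X → ℝ) →L[ℝ] ℝ := ∑ x, μ x • ContinuousLinearMap.proj x
  have hL : ∀ v, L v = ∑ x, v x * μ x := fun v => by simp [L, mul_comm]
  have hV : HasFDerivAt (vbos μ σ) (L - fderiv ℝ (fBreg σ) q) q := by
    have : vbos μ σ = fun p => L p - fBreg σ p := funext fun p => by rw [vbos_eq_sum_sub_fBreg, hL]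
    rw [this]
    exact L.hasFDerivAt.sub hdiff.hasFDerivAt
  have hfoc := hmax.hasFDerivAt_apply_sub_eq_zero_of_stdSimplex hV hp hq hpos
  rw [sub_apply, sub_eq_zero] at hfoc
  rw [bregman, ← hfoc, map_sub, vbos_eq_sum_sub_fBreg, vbos_eq_sum_sub_fBreg, hL, hL]
  ring

end

theorem stmt_6_general {X : Type*} [Fintype X] (μ σ : X → ℝ) (hσ : ∀ x, 0 < σ x)
    (πt : X → ℝ) (hπt : πt ∈ stdSimplex ℝ X)
    (hmax : IsMaxOn (vbos μ σ) (stdSimplex ℝ X) πt) :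
    StrictConvexOn ℝ {p ∈ stdSimplex ℝ X | ∀ x, 0 < p x} (fBreg σ) ∧
      ContDiffOn ℝ 1 (fBreg σ) {p ∈ stdSimplex ℝ X | ∀ x, 0 < p x} ∧
      ∀ π ∈ stdSimplex ℝ X, bregman σ π πt = vbos μ σ πt - vbos μ σ π := by
  refine ⟨fBreg_strictConvexOn hσ, fBreg_contDiffOn σ, fun π hπ => ?_⟩
  rcases subsingleton_or_nontrivial X with hX | hX
  · rw [subsingleton_stdSimplex hπ hπt]
    simp [bregman]
  · have hpos := pos_of_isMaxOn_vbos hσ hπt hmax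
    have hdiff : DifferentiableAt ℝ (fBreg σ) πt :=
      (contDiffAt_fBreg σ (n := 1) fun x => (Real.log_neg (hpos x)
        (mem_Ioo_of_mem_stdSimplex hπt hpos x).2).ne).differentiableAt one_ne_zero
    exact bregman_eq_vbos_sub_vbos_of_isMaxOn hπt hpos hdiff hmax hπ

/-- For positive `σ`, `f(p) = −Σ_x p_x σ_x sqrt(−2 ln p_x)` is strictly convex and
continuously differentiable on the (relative) interior of the simplex, and for any `π` in the
probability simplex and `π̃` the maximizer of the VBOS objective `V` over the simplex,
`D_σ(π, π̃) = V(π̃) − V(π)`. -/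
theorem stmt_6 {X : Type*} [Fintype X] [Nonempty X] (μ σ : X → ℝ) (hσ : ∀ x, 0 < σ x)
    (πt : X → ℝ) (hπt : πt ∈ stdSimplex ℝ X)
    (hmax : IsMaxOn (vbos μ σ) (stdSimplex ℝ X) πt) :
    StrictConvexOn ℝ {p ∈ stdSimplex ℝ X | ∀ x, 0 < p x} (fBreg σ) ∧
      ContDiffOn ℝ 1 (fBreg σ) {p ∈ stdSimplex ℝ X | ∀ x, 0 < p x} ∧
      ∀ π ∈ stdSimplex ℝ X, bregman σ π πt = vbos μ σ πt - vbos μ σ π :=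
  stmt_6_general μ σ hσ πt hπt hmax
end

section
/- Let v(c) := exp(−(sqrt(c² + 4) − c)²/8) for c ∈ ℝ. Then v is a strictly increasing bijection from ℝ to (0,1), and its inverse satisfies v⁻¹(u) = 1/sqrt(−2 ln u) − sqrt(−2 ln u) for u ∈ (0,1). -/
noncomputable def vFun (c : ℝ) : ℝ := Real.exp (-(Real.sqrt (c ^ 2 + 4) - c) ^ 2 / 8)

lemma lt_sqrt_aux (c : ℝ) : c < Real.sqrt (c ^ 2 + 4) := by
  have h : |c| < Real.sqrt (c ^ 2 + 4) := by
    rw [← Real.sqrt_sq_eq_abs]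
    exact Real.sqrt_lt_sqrt (sq_nonneg c) (by nlinarith)
  exact lt_of_le_of_lt (le_abs_self c) h

lemma neg_lt_sqrt_aux (c : ℝ) : -c < Real.sqrt (c ^ 2 + 4) := by
  have h : |c| < Real.sqrt (c ^ 2 + 4) := by
    rw [← Real.sqrt_sq_eq_abs]
    exact Real.sqrt_lt_sqrt (sq_nonneg c) (by nlinarith)
  exact lt_of_le_of_lt (neg_le_abs c) (by simpa using h)

lemma gAnti : StrictAnti (fun c : ℝ => Real.sqrt (c ^ 2 + 4) - c) := by
  intro a b hab
  have ha := lt_sqrt_aux a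
  have hb := lt_sqrt_aux b
  have ha' := neg_lt_sqrt_aux a
  have hb' := neg_lt_sqrt_aux b
  have hsa : Real.sqrt (a ^ 2 + 4) ^ 2 = a ^ 2 + 4 := Real.sq_sqrt (by positivity)
  have hsb : Real.sqrt (b ^ 2 + 4) ^ 2 = b ^ 2 + 4 := Real.sq_sqrt (by positivity)
  dsimp only
  nlinarith [mul_pos (by linarith : (0:ℝ) < Real.sqrt (a ^ 2 + 4) + Real.sqrt (b ^ 2 + 4))
    (by linarith : (0:ℝ) < Real.sqrt (a ^ 2 + 4) + Real.sqrt (b ^ 2 + 4))]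

lemma vMono : StrictMono vFun := by
  intro a b hab
  have h : Real.sqrt (b ^ 2 + 4) - b < Real.sqrt (a ^ 2 + 4) - a := gAnti hab
  have hb : 0 < Real.sqrt (b ^ 2 + 4) - b := by have := lt_sqrt_aux b; linarith
  unfold vFun
  apply Real.exp_lt_exp.mpr
  have : (Real.sqrt (b ^ 2 + 4) - b) ^ 2 < (Real.sqrt (a ^ 2 + 4) - a) ^ 2 := by nlinarith
  linarith

lemma vKey : ∀ u ∈ Set.Ioo (0 : ℝ) 1,
    vFun (1 / Real.sqrt (-2 * Real.log u) - Real.sqrt (-2 * Real.log u)) = u := by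
  intro u hu
  obtain ⟨hu0, hu1⟩ := hu
  have hlog : Real.log u < 0 := Real.log_neg hu0 hu1
  set t := Real.sqrt (-2 * Real.log u) with ht
  have ht0 : 0 < t := Real.sqrt_pos.mpr (by linarith)
  have ht2 : t ^ 2 = -2 * Real.log u := Real.sq_sqrt (by linarith)
  have hc : (1 / t - t) ^ 2 + 4 = (1 / t + t) ^ 2 := by
    field_simp
    ring
  have hs : Real.sqrt ((1 / t - t) ^ 2 + 4) = 1 / t + t := by
    rw [hc]
    exact Real.sqrt_sq (by positivity)
  unfold vFun
  rw [hs]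
  have : (1 / t + t - (1 / t - t)) = 2 * t := by ring
  rw [this]
  have : -(2 * t) ^ 2 / 8 = Real.log u := by
    have : (2 * t) ^ 2 = 4 * t ^ 2 := by ring
    rw [this, ht2]; ring
  rw [this, Real.exp_log hu0]

/-- `v(c) = exp(−(sqrt(c²+4) − c)²/8)` is a strictly increasing bijection from
`ℝ` onto `(0,1)`, and its inverse is `u ↦ 1/sqrt(−2 ln u) − sqrt(−2 ln u)`. -/
theorem stmt_8 :
    StrictMono vFun ∧ Set.BijOn vFun Set.univ (Set.Ioo (0 : ℝ) 1) ∧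
      ∀ u ∈ Set.Ioo (0 : ℝ) 1,
        vFun (1 / Real.sqrt (-2 * Real.log u) - Real.sqrt (-2 * Real.log u)) = u := by
  refine ⟨vMono, ⟨?_, vMono.injective.injOn, ?_⟩, vKey⟩
  · intro c _
    constructor
    · exact Real.exp_pos _
    · have h : 0 < Real.sqrt (c ^ 2 + 4) - c := by have := lt_sqrt_aux c; linarith
      exact Real.exp_lt_one_iff.mpr (by nlinarith)
  · intro u hu
    exact ⟨_, Set.mem_univ _, vKey u hu⟩
end
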